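/- In any coop, for a non-zero element x and natural numbers 0 ≤ i < j ≤ 2^n, one has (i/2^n)·x < (j/2^n)·x and ((i/2^n)·x) → ((j/2^n)·x) = ((j−i)/2^n)·x, where (i/2^n)·x denotes the i-fold sum of the n-fold iterated halving of x. -/
import Mathlib


/-- A pocrim: commutative monoid (z, ad) with residuation operation im,
    ordered by `x ≥ y iff im x y = z`. -/
class Pocrim (M : Type*) where
  z : M
  ad : M → M → M
  im : M → M → M
  ad_assoc : ∀ x y w : M, ad (ad x y) w = ad x (ad y w)
  ad_comm : ∀ x y : M, ad x y = ad y x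
  ad_zero : ∀ x : M, ad x z = x
  ge_refl : ∀ x : M, im x x = z
  ge_trans : ∀ x y w : M, im x y = z → im y w = z → im x w = z
  ge_antisymm : ∀ x y : M, im x y = z → im y x = z → x = y
  ad_mono : ∀ x y w : M, im x y = z → im (ad x w) (ad y w) = z
  ge_zero : ∀ x : M, im x z = z
  resid : ∀ x y w : M, (im (ad x y) w = z ↔ im x (im y w) = z)

namespace Pocrim

variable {M : Type*} [Pocrim M]

/-- `ge x y` means x ≥ y, i.e. x → y = 0. -/
def ge (x y : M) : Prop := im x y = z

end Pocrim

open Pocrim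

/-- A hoop is a pocrim satisfying x + (x → y) = y + (y → x). -/
class Hoop (M : Type*) extends Pocrim M where
  cwc : ∀ x y : M, ad x (im x y) = ad y (im y x)

/-- A coop is a hoop with a halving operation satisfying x/2 = x/2 → x. -/
class Coop (M : Type*) extends Hoop M where
  half : M → M
  half_ax : ∀ x : M, half x = im (half x) x

open Coop

/-- m-fold sum. -/
def nsm {M : Type*} [Pocrim M] : ℕ → M → M
  | 0, _ => z
  | n + 1, x => ad x (nsm n x)

/-- n-fold halving. -/
def halveN {M : Type*} [Coop M] : ℕ → M → M
  | 0, x => x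
  | n + 1, x => half (halveN n x)

section Lemmas

variable {M : Type*}

section PocrimLemmas
variable [Pocrim M]

lemma ge_ad_right (x y : M) : im (ad x y) y = z :=
  (Pocrim.resid x y y).mpr (by rw [Pocrim.ge_refl, Pocrim.ge_zero])

lemma ge_ad_left (x y : M) : im (ad x y) x = z := by
  rw [Pocrim.ad_comm]; exact ge_ad_right y x

lemma im_ad_ge (y w : M) : im (ad (im y w) y) w = z :=
  (Pocrim.resid _ y w).mpr (Pocrim.ge_refl _)

lemma resid_eq (x y w : M) : im (ad x y) w = im x (im y w) := by
  apply Pocrim.ge_antisymm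
  · have h1 : im (ad (im (ad x y) w) (ad x y)) w = z :=
      (Pocrim.resid _ _ _).mpr (Pocrim.ge_refl _)
    rw [← Pocrim.ad_assoc] at h1
    have h3 : im (ad (im (ad x y) w) x) (im y w) = z := (Pocrim.resid _ _ _).mp h1
    exact (Pocrim.resid _ _ _).mp h3
  · have h1 : im (ad (im x (im y w)) x) (im y w) = z :=
      (Pocrim.resid _ _ _).mpr (Pocrim.ge_refl _)
    have h2 : im (ad (ad (im x (im y w)) x) y) (ad (im y w) y) = z :=
      Pocrim.ad_mono _ _ _ h1
    have h3 : im (ad (ad (im x (im y w)) x) y) w = z :=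
      Pocrim.ge_trans _ _ _ h2 (im_ad_ge y w)
    rw [Pocrim.ad_assoc] at h3
    exact (Pocrim.resid _ _ _).mp h3

lemma nsm_succ (n : ℕ) (x : M) : nsm (n + 1) x = ad x (nsm n x) := rfl

lemma nsm_zero (x : M) : nsm 0 x = z := rfl

lemma nsm_add (a b : ℕ) (y : M) : nsm (a + b) y = ad (nsm a y) (nsm b y) := by
  induction a with
  | zero => rw [Nat.zero_add, nsm_zero, Pocrim.ad_comm, Pocrim.ad_zero]
  | succ n ih =>
      have e : n + 1 + b = (n + b) + 1 := by omega
      rw [e, nsm_succ, ih, nsm_succ, Pocrim.ad_assoc]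

lemma nsm_z (k : ℕ) : nsm k (z : M) = z := by
  induction k with
  | zero => rfl
  | succ n ih => rw [nsm_succ, ih, Pocrim.ad_zero]

lemma nsm_double (q : ℕ) (u : M) : nsm (2 * q) u = nsm q (ad u u) := by
  induction q with
  | zero => rfl
  | succ n ih =>
      have e : 2 * (n + 1) = 2 * n + 2 := by omega
      rw [e, nsm_add, ih, nsm_succ, nsm_succ, nsm_succ, nsm_zero, Pocrim.ad_zero,
        Pocrim.ad_comm]

end PocrimLemmas

section HoopLemmas
variable [Hoop M]

lemma im_z_eq (x : M) : im (z : M) x = x := by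
  have h := Hoop.cwc (z : M) x
  rw [Pocrim.ge_zero, Pocrim.ad_zero] at h
  rw [Pocrim.ad_comm, Pocrim.ad_zero] at h
  exact h

lemma ge_mono_im (c : M) {a b : M} (h : im a b = z) : im (im c a) (im c b) = z := by
  rw [← resid_eq]
  have h1 : ad (im c a) c = ad a (im a c) := by rw [Pocrim.ad_comm]; exact Hoop.cwc c a
  rw [h1]
  exact Pocrim.ge_trans _ _ _ (ge_ad_left a (im a c)) h

lemma ge_sub_ad (a b : M) : im a (im b (ad a b)) = z := by
  rw [← resid_eq]; exact Pocrim.ge_refl _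

end HoopLemmas

section CoopLemmas
variable [Coop M]

lemma half_ge (x : M) : im x (half x) = z := by
  rw [Coop.half_ax, ← resid_eq]
  exact ge_ad_left x (half x)

lemma half_add (x : M) : ad (half x) (half x) = x := by
  have h := Hoop.cwc (half x) x
  rw [← Coop.half_ax, half_ge, Pocrim.ad_zero] at h
  exact h

lemma halveN_succ (n : ℕ) (x : M) : halveN (n + 1) x = half (halveN n x) := rfl

lemma halveN_sum (n : ℕ) (x : M) : nsm (2 ^ n) (halveN n x) = x := by
  induction n with
  | zero =>
      show nsm 1 x = x
      rw [nsm_succ, nsm_zero, Pocrim.ad_zero]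
  | succ n ih =>
      have e : 2 ^ (n + 1) = 2 * 2 ^ n := by ring
      rw [e, nsm_double, halveN_succ, half_add, ih]

lemma D_lemma : ∀ (n m : ℕ) (x : M), m < 2 ^ n →
    im (halveN n x) (ad (halveN n x) (nsm m (halveN n x))) = nsm m (halveN n x) := by
  intro n
  induction n with
  | zero =>
      intro m x hm
      have hm0 : m = 0 := by omega
      subst hm0
      show im x (ad x z) = z
      rw [Pocrim.ad_zero, Pocrim.ge_refl]
  | succ n ih =>
      intro m x hm
      have e2 : (2:ℕ) ^ (n + 1) = 2 ^ n + 2 ^ n := by ring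
      have hh : ad (halveN (n+1) x) (halveN (n+1) x) = halveN n x := by
        rw [halveN_succ]; exact half_add _
      set h := halveN n x with hdef
      set h' := halveN (n+1) x with h'def
      have imh : ∀ w : M, im h w = im h' (im h' w) := fun w => by
        rw [← hh, resid_eq]
      rcases Nat.even_or_odd m with ⟨q, hq⟩ | ⟨q, hq⟩
      · -- even : m = q + q
        have hqlt : q < 2 ^ n := by omega
        have hA : nsm m h' = nsm q h := by
          rw [hq, ← two_mul, nsm_double, hh]
        have ihq := ih q x hqlt
        rw [hA]
        -- goal : im h' (ad h' (nsm q h)) = nsm q h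
        have hadhA : ad h (nsm q h) = ad h' (ad h' (nsm q h)) := by
          rw [← hh, Pocrim.ad_assoc]
        have hAR : nsm q h = im h' (im h' (ad h' (ad h' (nsm q h)))) := by
          rw [← hadhA, ← imh, ihq]
        have geQR : im (ad h' (nsm q h)) (im h' (ad h' (ad h' (nsm q h)))) = z := by
          have t := ge_sub_ad (ad h' (nsm q h)) h'
          rw [Pocrim.ad_comm (ad h' (nsm q h)) h'] at t
          exact t
        have gePA : im (im h' (ad h' (nsm q h))) (im h' (im h' (ad h' (ad h' (nsm q h))))) = z :=
          ge_mono_im h' geQR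
        rw [← hAR] at gePA
        have geAP : im (nsm q h) (im h' (ad h' (nsm q h))) = z := by
          have t := ge_sub_ad (nsm q h) h'
          rw [Pocrim.ad_comm (nsm q h) h'] at t
          exact t
        exact Pocrim.ge_antisymm _ _ gePA geAP
      · -- odd : m = 2 * q + 1
        have hqlt : q < 2 ^ n := by omega
        have ihq := ih q x hqlt
        have hA : nsm m h' = ad h' (nsm q h) := by
          rw [hq, nsm_succ, nsm_double, hh]
        rw [hA]
        have hB : ad h' (ad h' (nsm q h)) = ad h (nsm q h) := by
          rw [← hh, Pocrim.ad_assoc]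
        rw [hB]
        -- goal : im h' (ad h (nsm q h)) = ad h' (nsm q h)
        have h1 : im h' (im h' (ad h (nsm q h))) = nsm q h := by
          rw [← imh]; exact ihq
        have geBh : im (ad h (nsm q h)) h = z := ge_ad_left h (nsm q h)
        have imh'h : im h' h = h' := by
          rw [h'def, halveN_succ]
          exact (Coop.half_ax h).symm
        have geSh' : im (im h' (ad h (nsm q h))) h' = z := by
          have t := ge_mono_im h' geBh
          rwa [imh'h] at t
        have hc := Hoop.cwc h' (im h' (ad h (nsm q h)))
        rw [h1, geSh', Pocrim.ad_zero] at hc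
        exact hc.symm

lemma compl (n : ℕ) (x : M) : ∀ k, k ≤ 2 ^ n →
    im (nsm k (halveN n x)) x = nsm (2 ^ n - k) (halveN n x) := by
  intro k
  induction k with
  | zero =>
      intro _
      rw [nsm_zero, im_z_eq, Nat.sub_zero, halveN_sum]
  | succ k ihk =>
      intro hk
      have hk' : k ≤ 2 ^ n := Nat.le_of_succ_le hk
      rw [nsm_succ, resid_eq, ihk hk']
      have hp : (1:ℕ) ≤ 2 ^ n := Nat.one_le_two_pow
      have e : 2 ^ n - k = (2 ^ n - (k + 1)) + 1 := by omega
      rw [e, nsm_succ]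
      exact D_lemma n (2 ^ n - (k + 1)) x (by omega)

end CoopLemmas

end Lemmas

theorem coop_dyadic_fractions {M : Type*} [Coop M] (x : M) (hx : x ≠ z)
    (i j n : ℕ) (hij : i < j) (hj : j ≤ 2 ^ n) :
    (ge (nsm j (halveN n x)) (nsm i (halveN n x)) ∧
      nsm i (halveN n x) ≠ nsm j (halveN n x)) ∧
    im (nsm i (halveN n x)) (nsm j (halveN n x)) = nsm (j - i) (halveN n x) := by
  have hp : (1:ℕ) ≤ 2 ^ n := Nat.one_le_two_pow
  have key : im (nsm i (halveN n x)) (nsm j (halveN n x)) = nsm (j - i) (halveN n x) := by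
    have h1 : im (nsm (2 ^ n - j) (halveN n x)) x = nsm j (halveN n x) := by
      rw [compl n x (2 ^ n - j) (by omega)]
      congr 1
      omega
    calc im (nsm i (halveN n x)) (nsm j (halveN n x))
        = im (nsm i (halveN n x)) (im (nsm (2 ^ n - j) (halveN n x)) x) := by rw [h1]
      _ = im (ad (nsm i (halveN n x)) (nsm (2 ^ n - j) (halveN n x))) x := (resid_eq _ _ _).symm
      _ = im (nsm (i + (2 ^ n - j)) (halveN n x)) x := by rw [nsm_add]
      _ = nsm (2 ^ n - (i + (2 ^ n - j))) (halveN n x) := compl n x _ (by omega)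
      _ = nsm (j - i) (halveN n x) := by congr 1; omega
  refine ⟨⟨?_, ?_⟩, key⟩
  · show im (nsm j (halveN n x)) (nsm i (halveN n x)) = z
    have hjs : nsm j (halveN n x) = ad (nsm (j - i) (halveN n x)) (nsm i (halveN n x)) := by
      rw [← nsm_add]
      congr 1
      omega
    rw [hjs]
    exact ge_ad_right _ _
  · intro heq
    rw [heq, Pocrim.ge_refl] at key
    have e : j - i = (j - i - 1) + 1 := by omega
    rw [e, nsm_succ] at key
    have hz : halveN n x = z := by
      have t := ge_ad_left (halveN n x) (nsm (j - i - 1) (halveN n x))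
      rw [← key] at t
      rwa [im_z_eq] at t
    apply hx
    rw [← halveN_sum n x, hz, nsm_z]
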